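/- arXiv:2302.05396 — 5 statements merged into one kernel-verified Lean document; each statement's English description precedes it below -/
import Mathlib

section
/- Let K > 1, a > 0 and A > 0, and let f : [A/K, ∞) → [0, ∞) and g : [A, ∞) → [0, ∞) be measurable functions such that (i) f(α) ≤ K^{−a}/2 for all α ≥ A/K, (ii) f(α) ≤ f(α/K)² + g(α) for all α ≥ A, and (iii) ∫_A^∞ α^{a−1} g(α) dα < ∞. Then ∫_A^∞ α^{a−1} f(α) dα < ∞. -/
open MeasureTheory Set intervalIntegral

/-!
With `φ(α) = α^(a-1) f(α)` and `ψ(α) = α^(a-1) g(α)`, the bound `f ≤ K^(-a)/2` linearises the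
recursion to `φ(α) ≤ (2K)⁻¹ φ(α/K) + ψ(α)`. Integrating over `[A, R]` and substituting
`α ↦ α/K` gives `∫_A^R φ ≤ ½ ∫_{A/K}^R φ + ∫_A^∞ ψ`. Since `f` is bounded, the truncated
integrals are finite, so half of `∫_A^R φ` can be absorbed into the left-hand side, which leaves
a bound uniform in `R`.
-/

theorem intervalIntegrable_rpow_mul_of_bounded {f : ℝ → ℝ} {s M : ℝ} (p : ℝ) (hs : 0 < s)
    (hf : Measurable f) (hbd : ∀ x, s ≤ x → ‖f x‖ ≤ M) {u v : ℝ} (hu : s ≤ u) (hv : s ≤ v) :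
    IntervalIntegrable (fun x => x ^ p * f x) volume u v := by
  have hsub : ∀ x ∈ uIcc u v, s ≤ x := fun x hx => (le_min hu hv).trans hx.1
  have hf_int : IntervalIntegrable f volume u v :=
    (Measure.integrableOn_of_bounded measure_Icc_lt_top.ne hf.aestronglyMeasurable
      ((ae_restrict_iff' measurableSet_Icc).2
        (Filter.Eventually.of_forall fun x hx => hbd x (hsub x hx)))).intervalIntegrable
  exact hf_int.continuousOn_mul fun x hx =>
    (Real.continuousAt_rpow_const x p (Or.inl (hs.trans_le (hsub x hx)).ne')).continuousWithinAt

theorem rpow_mul_le_of_le_sq_add {K a c x y z w : ℝ} (hK : 0 < K) (hx : 0 ≤ x) (hz : 0 ≤ z)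
    (hzK : z ≤ c * K ^ (-a)) (hy : y ≤ z ^ 2 + w) :
    x ^ (a - 1) * y ≤ c * K⁻¹ * ((x / K) ^ (a - 1) * z) + x ^ (a - 1) * w := by
  have hxp : 0 ≤ x ^ (a - 1) := Real.rpow_nonneg hx _
  have hsq : z ^ 2 ≤ c * K ^ (-a) * z := by nlinarith
  have hscale : x ^ (a - 1) * K ^ (-a) = K⁻¹ * (x / K) ^ (a - 1) := by
    rw [Real.div_rpow hx hK.le, Real.rpow_neg hK.le, Real.rpow_sub_one hK.ne']
    field_simp
  calc x ^ (a - 1) * y ≤ x ^ (a - 1) * (c * K ^ (-a) * z + w) := by gcongr; linarith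
    _ = c * (x ^ (a - 1) * K ^ (-a)) * z + x ^ (a - 1) * w := by ring
    _ = c * K⁻¹ * ((x / K) ^ (a - 1) * z) + x ^ (a - 1) * w := by rw [hscale]; ring

section

variable {φ ψ : ℝ → ℝ} {K c A : ℝ}

theorem intervalIntegral_le_of_le_comp_div_add (hK : 1 ≤ K) (hA : 0 ≤ A) (hc₀ : 0 ≤ c)
    (hc₁ : c < 1) (hφ_nonneg : ∀ x, A / K ≤ x → 0 ≤ φ x)
    (hφ_int : ∀ u v, A / K ≤ u → A / K ≤ v → IntervalIntegrable φ volume u v)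
    (hψ_nonneg : ∀ x, A < x → 0 ≤ ψ x) (hψ : IntegrableOn ψ (Ioi A))
    (hrec : ∀ x, A ≤ x → φ x ≤ c * K⁻¹ * φ (x / K) + ψ x) {R : ℝ} (hR : A ≤ R) :
    ∫ x in A..R, φ x ≤ (c * (∫ x in A / K..A, φ x) + ∫ x in Ioi A, ψ x) / (1 - c) := by
  have hK₀ : 0 < K := one_pos.trans_le hK
  have hAK : A / K ≤ A := div_le_self hA hK
  have hRK : R / K ≤ R := div_le_self (hA.trans hR) hK
  have hAR : A / K ≤ R / K := div_le_div_of_nonneg_right hR hK₀.le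
  have hφ_comp : IntervalIntegrable (fun x => φ (x / K)) volume A R := by
    simpa [div_eq_inv_mul, hK₀.ne'] using
      (hφ_int (A / K) (R / K) le_rfl hAR).comp_mul_left (c := K⁻¹)
  have hψ_int : IntervalIntegrable ψ volume A R :=
    (intervalIntegrable_iff_integrableOn_Ioc_of_le hR).2 (hψ.mono_set Ioc_subset_Ioi_self)
  have hsplit : ∫ x in A / K..R, φ x = (∫ x in A / K..A, φ x) + ∫ x in A..R, φ x :=
    (integral_add_adjacent_intervals (hφ_int _ _ le_rfl hAK) (hφ_int _ _ hAK (hAK.trans hR))).symm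
  have hsubst : ∫ x in A..R, φ (x / K) = K * ∫ x in A / K..R / K, φ x := integral_comp_div _ hK₀.ne'
  have hshrink : ∫ x in A / K..R / K, φ x ≤ ∫ x in A / K..R, φ x :=
    integral_mono_interval le_rfl hAR hRK
      ((ae_restrict_iff' measurableSet_Ioc).2
        (Filter.Eventually.of_forall fun x hx => hφ_nonneg x hx.1.le))
      (hφ_int _ _ le_rfl (hAK.trans hR))
  have hψ_le : ∫ x in A..R, ψ x ≤ ∫ x in Ioi A, ψ x := by
    rw [integral_of_le hR]
    exact setIntegral_mono_set hψ
      ((ae_restrict_iff' measurableSet_Ioi).2 (Filter.Eventually.of_forall hψ_nonneg))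
      Ioc_subset_Ioi_self.eventuallyLE
  have hmono : ∫ x in A..R, φ x ≤ c * K⁻¹ * (∫ x in A..R, φ (x / K)) + ∫ x in A..R, ψ x := by
    rw [← intervalIntegral.integral_const_mul, ← integral_add (hφ_comp.const_mul _) hψ_int]
    exact integral_mono_on hR (hφ_int _ _ hAK (hAK.trans hR)) ((hφ_comp.const_mul _).add hψ_int)
      fun x hx => hrec x hx.1
  have hcancel : c * K⁻¹ * (K * ∫ x in A / K..R / K, φ x) = c * ∫ x in A / K..R / K, φ x := by
    field_simp
  rw [hsubst, hcancel] at hmono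
  -- `∫_A^R φ ≤ c (∫_{A/K}^A φ + ∫_A^R φ) + ∫ ψ`, and `∫_A^R φ` is finite: absorb its `c`-part.
  rw [le_div_iff₀ (sub_pos.2 hc₁)]
  nlinarith [mul_le_mul_of_nonneg_left hshrink hc₀]

theorem integrableOn_Ioi_of_le_comp_div_add (hK : 1 ≤ K) (hA : 0 ≤ A) (hc₀ : 0 ≤ c)
    (hc₁ : c < 1) (hφ_nonneg : ∀ x, A / K ≤ x → 0 ≤ φ x)
    (hφ_int : ∀ u v, A / K ≤ u → A / K ≤ v → IntervalIntegrable φ volume u v)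
    (hψ_nonneg : ∀ x, A < x → 0 ≤ ψ x) (hψ : IntegrableOn ψ (Ioi A))
    (hrec : ∀ x, A ≤ x → φ x ≤ c * K⁻¹ * φ (x / K) + ψ x) :
    IntegrableOn φ (Ioi A) := by
  have hAK : A / K ≤ A := div_le_self hA hK
  refine integrableOn_Ioi_of_intervalIntegral_norm_bounded
    ((c * (∫ x in A / K..A, φ x) + ∫ x in Ioi A, ψ x) / (1 - c)) A
    (fun R => ((hφ_int A (max A R) hAK (hAK.trans (le_max_left _ _))).1).mono_set
      (Ioc_subset_Ioc_right (le_max_right _ _))) Filter.tendsto_id ?_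
  filter_upwards [Filter.eventually_ge_atTop A] with R hR
  have hnorm : ∫ x in A..R, ‖φ x‖ = ∫ x in A..R, φ x :=
    integral_congr fun x hx => Real.norm_of_nonneg <|
      hφ_nonneg x (hAK.trans (by rw [uIcc_of_le hR] at hx; exact hx.1))
  rw [hnorm]
  exact intervalIntegral_le_of_le_comp_div_add hK hA hc₀ hc₁ hφ_nonneg hφ_int hψ_nonneg hψ hrec hR

end

theorem integral_bootstrap_general (K a A : ℝ) (hK : 1 < K) (hA : 0 < A)
    (f g : ℝ → ℝ) (hf_meas : Measurable f)
    (hf_nonneg : ∀ α, A / K ≤ α → 0 ≤ f α)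
    (hg_nonneg : ∀ α, A ≤ α → 0 ≤ g α)
    (hf_small : ∀ α, A / K ≤ α → f α ≤ K ^ (-a) / 2)
    (hrec : ∀ α, A ≤ α → f α ≤ (f (α / K)) ^ 2 + g α)
    (hg_int : IntegrableOn (fun α => α ^ (a - 1) * g α) (Set.Ici A)) :
    IntegrableOn (fun α => α ^ (a - 1) * f α) (Set.Ici A) := by
  have hK₀ : 0 < K := one_pos.trans hK
  have hAK : 0 < A / K := div_pos hA hK₀
  have hφ_int : ∀ u v, A / K ≤ u → A / K ≤ v →
      IntervalIntegrable (fun α => α ^ (a - 1) * f α) volume u v :=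
    fun u v hu hv => intervalIntegrable_rpow_mul_of_bounded (a - 1) hAK hf_meas
      (fun α hα => (Real.norm_of_nonneg (hf_nonneg α hα)).trans_le (hf_small α hα)) hu hv
  have hlin : ∀ α, A ≤ α →
      α ^ (a - 1) * f α ≤ 2⁻¹ * K⁻¹ * ((α / K) ^ (a - 1) * f (α / K)) + α ^ (a - 1) * g α :=
    fun α hα =>
      have hαK : A / K ≤ α / K := div_le_div_of_nonneg_right hα hK₀.le
      rpow_mul_le_of_le_sq_add hK₀ (hA.le.trans hα) (hf_nonneg _ hαK)
        ((hf_small _ hαK).trans_eq (div_eq_inv_mul _ _)) (hrec α hα)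
  rw [integrableOn_Ici_iff_integrableOn_Ioi]
  exact integrableOn_Ioi_of_le_comp_div_add hK.le hA.le (by norm_num) (by norm_num)
    (fun α hα => mul_nonneg (Real.rpow_nonneg (hAK.le.trans hα) _) (hf_nonneg α hα)) hφ_int
    (fun α hα => mul_nonneg (Real.rpow_nonneg (hA.le.trans hα.le) _) (hg_nonneg α hα.le))
    (hg_int.mono_set Ioi_subset_Ici_self) hlin

/-- Deterministic integral lemma behind Theorem 1(ii) (moment bounds): if
`f ≤ K^(-a)/2` on `[A/K, ∞)`, `f(α) ≤ f(α/K)² + g(α)` on `[A, ∞)`, and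
`∫_A^∞ α^(a-1) g(α) dα < ∞`, then `∫_A^∞ α^(a-1) f(α) dα < ∞`. -/
theorem integral_bootstrap (K a A : ℝ) (hK : 1 < K) (ha : 0 < a) (hA : 0 < A)
    (f g : ℝ → ℝ) (hf_meas : Measurable f) (hg_meas : Measurable g)
    (hf_nonneg : ∀ α, A / K ≤ α → 0 ≤ f α)
    (hg_nonneg : ∀ α, A ≤ α → 0 ≤ g α)
    (hf_small : ∀ α, A / K ≤ α → f α ≤ K ^ (-a) / 2)
    (hrec : ∀ α, A ≤ α → f α ≤ (f (α / K)) ^ 2 + g α)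
    (hg_int : IntegrableOn (fun α => α ^ (a - 1) * g α) (Set.Ici A)) :
    IntegrableOn (fun α => α ^ (a - 1) * f α) (Set.Ici A) :=
  integral_bootstrap_general K a A hK hA f g hf_meas hf_nonneg hg_nonneg hf_small hrec hg_int
end

section
/- Let d ≥ 1 be an integer, μ > 0, and let φ : (0,1) × (0,1) × (0,∞) → [0,1] be measurable. Suppose there is a real number ψ > 2 such that limsup_{r→∞} (log ∫_{r^{−(1+μ)}}^1 ∫_{r^{−(1+μ)}}^1 φ(s,t,r) ds dt) / log r ≤ −ψ. Then for every ε ∈ (0, ψ − 2) there exist A > 1 and C > 0 such that for all α > A: α · ∫_{{x ∈ ℝ^d : |x|^d > α}} ( ∫_{|x|^{−d(1+μ)}}^1 ∫_{|x|^{−d(1+μ)}}^1 φ(u, v, |x|^d) du dv ) dx ≤ C · α^{2−ψ+ε}, where |x| denotes the Euclidean norm on ℝ^d. -/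
/-!
Put `q = ψ - ε`, so `2 < q < ψ`. The `limsup` hypothesis gives `F r ≤ r ^ (-q)` for large `r`,
where `F = markCutoffIntegral φ μ`, and the integrand at `x` is `F (‖x‖ ^ d)`. In polar
coordinates `∫_{‖x‖^d > α} ‖x‖ ^ (-d q) dx = vol(B₁) α ^ (1 - q) / (q - 1)`, and multiplying by
`α` gives `α ^ (2 - q) = α ^ (2 - ψ + ε)`.
-/

open MeasureTheory Filter Set Metric Real

theorem le_rpow_of_log_div_log_le {y r a : ℝ} (hr : 1 < r) (h : log y / log r ≤ a) :
    y ≤ r ^ a := by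
  rcases le_or_gt y 0 with hy | hy
  · exact hy.trans (rpow_pos_of_pos (by linarith) a).le
  · rw [div_le_iff₀ (log_pos hr)] at h
    exact (le_rpow_iff_log_le hy (by linarith)).mpr h

theorem eventually_le_rpow_of_limsup_log_div_log_lt {f : ℝ → ℝ} {a : ℝ} (ha : a ≤ 0)
    (h : limsup (fun r => log (f r) / log r) atTop < a) :
    ∀ᶠ r in atTop, f r ≤ r ^ a := by
  -- In `ℝ` the `limsup` of a function unbounded above is the junk value `sInf ∅ = 0`.
  have hbdd : IsBoundedUnder (· ≤ ·) atTop (fun r => log (f r) / log r) := by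
    by_contra hnb
    have hempty : {b | ∀ᶠ r in atTop, log (f r) / log r ≤ b} = ∅ :=
      eq_empty_of_forall_notMem fun b hb => hnb ⟨b, hb⟩
    rw [limsup_eq, hempty, Real.sInf_empty] at h
    exact ha.not_gt h
  filter_upwards [eventually_lt_of_limsup_lt h hbdd, eventually_gt_atTop 1] with r hr hr1
  exact le_rpow_of_log_div_log_le hr1 hr.le

theorem integral_Icc_integral_Icc_nonneg {f : ℝ → ℝ → ℝ} {a b : ℝ}
    (hf : ∀ s ∈ Ioo a b, ∀ t ∈ Ioo a b, 0 ≤ f s t) :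
    0 ≤ ∫ s in Icc a b, ∫ t in Icc a b, f s t := by
  simp_rw [integral_Icc_eq_integral_Ioo]
  exact setIntegral_nonneg measurableSet_Ioo fun s hs =>
    setIntegral_nonneg measurableSet_Ioo fun t ht => hf s hs t ht

theorem indicator_lt_norm_eq_indicator_Ioi_norm {E : Type*} [Norm E] (R : ℝ) (g : ℝ → ℝ) :
    {x : E | R < ‖x‖}.indicator (fun x => g ‖x‖) = fun x => (Ioi R).indicator g ‖x‖ :=
  rfl

section NormTail

variable {E : Type*} [NormedAddCommGroup E] [NormedSpace ℝ E] [FiniteDimensional ℝ E]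
  [Nontrivial E] {R p : ℝ}

local notation "dim" => Module.finrank ℝ

theorem pow_mul_indicator_Ioi_rpow {y : ℝ} (hy : 0 < y) :
    y ^ (dim E - 1) • (Ioi R).indicator (· ^ p) y =
      (Ioi R).indicator (· ^ ((dim E : ℝ) - 1 + p)) y := by
  by_cases hyR : y ∈ Ioi R
  · rw [indicator_of_mem hyR, indicator_of_mem hyR, smul_eq_mul, rpow_add hy,
      ← rpow_natCast, Nat.cast_sub Module.finrank_pos, Nat.cast_one]
  · rw [indicator_of_notMem hyR, indicator_of_notMem hyR, smul_zero]

variable [MeasurableSpace E] [BorelSpace E] (μ : Measure E) [μ.IsAddHaarMeasure]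

theorem integrableOn_norm_rpow_of_lt_norm (hR : 0 < R) (hp : p < -dim E) :
    IntegrableOn (fun x : E => ‖x‖ ^ p) {x | R < ‖x‖} μ := by
  rw [← integrable_indicator_iff (measurableSet_lt measurable_const measurable_norm),
    indicator_lt_norm_eq_indicator_Ioi_norm R (· ^ p), integrable_fun_norm_addHaar]
  exact ((integrable_indicator_iff measurableSet_Ioi).mpr
    (integrableOn_Ioi_rpow_of_lt (by linarith) hR)).integrableOn
    |>.congr_fun (fun y hy => (pow_mul_indicator_Ioi_rpow hy).symm) measurableSet_Ioi

theorem setIntegral_norm_rpow_of_lt_norm (hR : 0 < R) (hp : p < -dim E) :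
    ∫ x in {x | R < ‖x‖}, ‖x‖ ^ p ∂μ =
      dim E * μ.real (ball 0 1) * (R ^ (dim E + p) / -(dim E + p)) := by
  rw [← integral_indicator (measurableSet_lt measurable_const measurable_norm),
    indicator_lt_norm_eq_indicator_Ioi_norm R (· ^ p), integral_fun_norm_addHaar,
    setIntegral_congr_fun measurableSet_Ioi (fun y hy => pow_mul_indicator_Ioi_rpow hy),
    setIntegral_indicator measurableSet_Ioi, Ioi_inter_Ioi, max_eq_right hR.le,
    integral_Ioi_rpow_of_lt (by linarith) hR]
  simp only [nsmul_eq_mul, smul_eq_mul, neg_div, div_neg]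
  ring_nf

theorem setIntegral_lt_norm_le_of_le_norm_rpow {G : E → ℝ} (hR : 0 < R) (hp : p < -dim E)
    (hG_nonneg : ∀ x, R < ‖x‖ → 0 ≤ G x) (hG_le : ∀ x, R < ‖x‖ → G x ≤ ‖x‖ ^ p) :
    ∫ x in {x | R < ‖x‖}, G x ∂μ ≤
      dim E * μ.real (ball 0 1) * (R ^ (dim E + p) / -(dim E + p)) := by
  have hS : MeasurableSet {x : E | R < ‖x‖} :=
    measurableSet_lt measurable_const measurable_norm
  rw [← setIntegral_norm_rpow_of_lt_norm μ hR hp]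
  refine integral_mono_of_nonneg ?_ (integrableOn_norm_rpow_of_lt_norm μ hR hp) ?_
  · filter_upwards [ae_restrict_mem hS] with x hx using hG_nonneg x hx
  · filter_upwards [ae_restrict_mem hS] with x hx using hG_le x hx

theorem setIntegral_lt_norm_pow_le_of_le_rpow_neg {G : ℝ → ℝ} {α q : ℝ} (hα : 0 < α)
    (hq : 1 < q) (hG_nonneg : ∀ r, α < r → 0 ≤ G r) (hG_le : ∀ r, α < r → G r ≤ r ^ (-q)) :
    ∫ x in {x : E | α < ‖x‖ ^ dim E}, G (‖x‖ ^ dim E) ∂μ ≤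
      μ.real (ball 0 1) * (α ^ (1 - q) / (q - 1)) := by
  have hdim : (0 : ℝ) < dim E := by exact_mod_cast Module.finrank_pos
  have hmem (x : E) : α ^ (dim E : ℝ)⁻¹ < ‖x‖ ↔ α < ‖x‖ ^ dim E := by
    rw [rpow_inv_lt_iff_of_pos hα.le (norm_nonneg x) hdim, rpow_natCast]
  have hbound := setIntegral_lt_norm_le_of_le_norm_rpow μ (G := fun x => G (‖x‖ ^ dim E))
    (p := dim E * -q) (rpow_pos_of_pos hα _) (by nlinarith)
    (fun x hx => hG_nonneg _ ((hmem x).mp hx))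
    (fun x hx => (rpow_natCast_mul (norm_nonneg x) _ _).symm ▸ hG_le _ ((hmem x).mp hx))
  have hR : (α ^ (dim E : ℝ)⁻¹) ^ ((dim E : ℝ) + dim E * -q) = α ^ (1 - q) := by
    rw [← rpow_mul hα.le]
    congr 1
    field_simp
    ring
  simp_rw [hmem, hR] at hbound
  refine hbound.trans_eq ?_
  rw [show -((dim E : ℝ) + dim E * -q) = dim E * (q - 1) by ring]
  field_simp

end NormTail

noncomputable def markCutoffIntegral (φ : ℝ → ℝ → ℝ → ℝ) (μ r : ℝ) : ℝ :=
  ∫ s in Icc (r ^ (-(1 + μ))) 1, ∫ t in Icc (r ^ (-(1 + μ))) 1, φ s t r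

theorem markCutoffIntegral_nonneg {φ : ℝ → ℝ → ℝ → ℝ} {μ r : ℝ} (hr : 0 < r)
    (hφ : ∀ s ∈ Ioo (0 : ℝ) 1, ∀ t ∈ Ioo (0 : ℝ) 1, 0 ≤ φ s t r) :
    0 ≤ markCutoffIntegral φ μ r :=
  integral_Icc_integral_Icc_nonneg fun s hs t ht =>
    hφ s ⟨(rpow_pos_of_pos hr _).trans hs.1, hs.2⟩ t ⟨(rpow_pos_of_pos hr _).trans ht.1, ht.2⟩

theorem long_edge_bound_general (d : ℕ) (hd : 1 ≤ d) (μ : ℝ)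
    (φ : ℝ → ℝ → ℝ → ℝ)
    (hφ_range : ∀ s ∈ Set.Ioo (0 : ℝ) 1, ∀ t ∈ Set.Ioo (0 : ℝ) 1, ∀ r > (0 : ℝ),
      φ s t r ∈ Set.Icc (0 : ℝ) 1)
    (ψ : ℝ)
    (hlimsup : limsup (fun r : ℝ =>
        Real.log (∫ s in Set.Icc (r ^ (-(1 + μ))) 1,
          ∫ t in Set.Icc (r ^ (-(1 + μ))) 1, φ s t r) / Real.log r) atTop ≤ -ψ) :
    ∀ ε ∈ Set.Ioo (0 : ℝ) (ψ - 2), ∃ A > (1 : ℝ), ∃ C > (0 : ℝ), ∀ α > A,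
      α * ∫ x in {x : EuclideanSpace ℝ (Fin d) | α < ‖x‖ ^ d},
          (∫ u in Set.Icc (‖x‖ ^ (-(d : ℝ) * (1 + μ))) 1,
            ∫ v in Set.Icc (‖x‖ ^ (-(d : ℝ) * (1 + μ))) 1, φ u v (‖x‖ ^ d))
        ≤ C * α ^ (2 - ψ + ε) := by
  rintro ε ⟨hε, hεψ⟩
  have : Nonempty (Fin d) := ⟨⟨0, hd⟩⟩
  obtain ⟨A₀, hA₀⟩ := eventually_atTop.mp <|
    eventually_le_rpow_of_limsup_log_div_log_lt (f := markCutoffIntegral φ μ) (a := -(ψ - ε))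
      (by linarith) (hlimsup.trans_lt (by linarith))
  set V := volume.real (ball (0 : EuclideanSpace ℝ (Fin d)) 1)
  have hV : 0 < V :=
    ENNReal.toReal_pos (measure_ball_pos volume 0 one_pos).ne' measure_ball_lt_top.ne
  refine ⟨max A₀ 2, (le_max_right _ _).trans_lt' one_lt_two, V / (ψ - ε - 1),
    div_pos hV (by linarith), fun α hα => ?_⟩
  have hα0 : 0 < α := by linarith [le_max_right A₀ 2]
  have hcutoff (x : EuclideanSpace ℝ (Fin d)) :
      ‖x‖ ^ (-(d : ℝ) * (1 + μ)) = (‖x‖ ^ d) ^ (-(1 + μ)) := by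
    rw [neg_mul_comm, rpow_natCast_mul (norm_nonneg x)]
  have htail := setIntegral_lt_norm_pow_le_of_le_rpow_neg
    (E := EuclideanSpace ℝ (Fin d)) volume (G := markCutoffIntegral φ μ) hα0
    (by linarith : 1 < ψ - ε)
    (fun r hr => markCutoffIntegral_nonneg (hα0.trans hr) fun s hs t ht =>
      (hφ_range s hs t ht r (hα0.trans hr)).1)
    (fun r hr => hA₀ r ((le_max_left _ _).trans (hα.trans hr).le))
  rw [finrank_euclideanSpace_fin] at htail
  simp_rw [hcutoff]
  refine (mul_le_mul_of_nonneg_left htail hα0.le).trans_eq ?_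
  rw [show 2 - ψ + ε = 1 + (1 - (ψ - ε)) by ring, rpow_add hα0, rpow_one]
  ring

/-- Analytic heart of Lemma 2.1: if the double integral of the annealed connection
function `φ` with mark cutoff `r^(-(1+μ))` decays like `r^(-ψ)` with `ψ > 2`
(in the sense of a `limsup` of logarithms), then for every `ε ∈ (0, ψ - 2)` the
expected number of long edges
`α · ∫_{|x|^d > α} ∫∫_{[|x|^(-d(1+μ)),1]²} φ(u,v,|x|^d) du dv dx`
is bounded by `C · α^(2-ψ+ε)` for all large `α`. -/
theorem long_edge_bound (d : ℕ) (hd : 1 ≤ d) (μ : ℝ) (hμ : 0 < μ)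
    (φ : ℝ → ℝ → ℝ → ℝ)
    (hφ_meas : Measurable (fun p : ℝ × ℝ × ℝ => φ p.1 p.2.1 p.2.2))
    (hφ_range : ∀ s ∈ Set.Ioo (0 : ℝ) 1, ∀ t ∈ Set.Ioo (0 : ℝ) 1, ∀ r > (0 : ℝ),
      φ s t r ∈ Set.Icc (0 : ℝ) 1)
    (ψ : ℝ) (hψ : 2 < ψ)
    (hlimsup : limsup (fun r : ℝ =>
        Real.log (∫ s in Set.Icc (r ^ (-(1 + μ))) 1,
          ∫ t in Set.Icc (r ^ (-(1 + μ))) 1, φ s t r) / Real.log r) atTop ≤ -ψ) :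
    ∀ ε ∈ Set.Ioo (0 : ℝ) (ψ - 2), ∃ A > (1 : ℝ), ∃ C > (0 : ℝ), ∀ α > A,
      α * ∫ x in {x : EuclideanSpace ℝ (Fin d) | α < ‖x‖ ^ d},
          (∫ u in Set.Icc (‖x‖ ^ (-(d : ℝ) * (1 + μ))) 1,
            ∫ v in Set.Icc (‖x‖ ^ (-(d : ℝ) * (1 + μ))) 1, φ u v (‖x‖ ^ d))
        ≤ C * α ^ (2 - ψ + ε) :=
  long_edge_bound_general d hd μ φ hφ_range ψ hlimsup
end

section
/- Let d ≥ 1 be an integer and r > 0. Let V be a type, ι : V → ℝ^d a map, and G a simple graph on V. Assume: (short edges) whenever u, v ∈ V are adjacent in G and ‖ι(u)‖ < 30r and ‖ι(v)‖ < 30r, then ‖ι(u) − ι(v)‖ < r. Assume there are vertices y₀, z and a walk in G from y₀ to z such that every vertex p visited by the walk satisfies ‖ι(p)‖ < 30r, and such that ‖ι(y₀)‖ < 10r and ‖ι(z)‖ ≥ 20r. Let K, L ⊆ ℝ^d be sets (finite or not) such that {x ∈ ℝ^d : 9 ≤ ‖x‖ ≤ 10} ⊆ ⋃_{k∈K} B(k,1)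 and {x ∈ ℝ^d : 20 ≤ ‖x‖ ≤ 21} ⊆ ⋃_{l∈L} B(l,1), where B(c,ρ) is the open Euclidean ball of radius ρ around c. Then there exist k ∈ K and l ∈ L such that the annulus-crossing event occurs both at r·k and at r·l, where the annulus-crossing event at a point x ∈ ℝ^d means: there exist vertices y, w and a walk in G from y to w such that ‖ι(y) − x‖ < r, ‖ι(w) − x‖ ≥ 2r, and every vertex q visited by this walk satisfies ‖ι(q) − x‖ < 3r. -/
/-- The annulus-crossing event at center `x` and scale `r`: some vertex located
within distance `r` of `x` is joined by a walk, all of whose vertices are located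
within distance `3r` of `x`, to a vertex located at distance at least `2r` from `x`. -/
def AnnulusCrossing {d : ℕ} {V : Type*} (G : SimpleGraph V)
    (ι : V → EuclideanSpace ℝ (Fin d)) (r : ℝ) (x : EuclideanSpace ℝ (Fin d)) : Prop :=
  ∃ (y w : V) (p : G.Walk y w), ‖ι y - x‖ < r ∧ 2 * r ≤ ‖ι w - x‖ ∧
    ∀ q ∈ p.support, ‖ι q - x‖ < 3 * r

open SimpleGraph

lemma exists_first_cross {V : Type*} {G : SimpleGraph V} (f : V → ℝ) (t : ℝ) :
    ∀ {a b : V} (p : G.Walk a b), t ≤ f b →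
    ∃ (m : V) (q : G.Walk a m),
      (∀ x ∈ q.support, x ∈ p.support) ∧ t ≤ f m ∧
      (∀ x ∈ q.support, f x < t ∨ x = m) ∧
      (f a < t → ∃ u, G.Adj u m ∧ f u < t ∧ u ∈ p.support) := by
  intro a b p
  induction p with
  | @nil a =>
    intro h
    exact ⟨a, .nil, by simp, h, fun x hx => Or.inr (by simpa using hx),
      fun h' => absurd h h'.not_ge⟩
  | @cons a c b hadj p ih =>
    intro hb
    by_cases ha : t ≤ f a
    · exact ⟨a, .nil, by simp, ha, fun x hx => Or.inr (by simpa using hx),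
        fun h' => absurd ha h'.not_ge⟩
    · by_cases hc : t ≤ f c
      · refine ⟨c, .cons hadj .nil, ?_, hc, ?_, fun _ => ⟨a, hadj, not_le.1 ha, by simp⟩⟩
        · intro x hx; simp at hx; rcases hx with rfl | rfl <;> simp
        · intro x hx; simp at hx
          rcases hx with rfl | rfl
          · exact Or.inl (not_le.1 ha)
          · exact Or.inr rfl
      · obtain ⟨m, q, hsub, hm, hlt, hstep⟩ := ih hb
        obtain ⟨u, h1, h2, h3⟩ := hstep (not_le.1 hc)
        refine ⟨m, .cons hadj q, ?_, hm, ?_, fun _ => ⟨u, h1, h2, by simp [h3]⟩⟩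
        · intro x hx
          simp only [Walk.support_cons, List.mem_cons] at hx ⊢
          rcases hx with rfl | hx
          · exact Or.inl rfl
          · exact Or.inr (hsub x hx)
        · intro x hx
          simp only [Walk.support_cons, List.mem_cons] at hx
          rcases hx with rfl | hx
          · exact Or.inl (not_le.1 ha)
          · exact hlt x hx

lemma annulus_of_walk {d : ℕ} {V : Type*} {G : SimpleGraph V}
    {ι : V → EuclideanSpace ℝ (Fin d)} {r : ℝ} (hr : 0 < r)
    (hshort : ∀ u v : V, G.Adj u v → ‖ι u‖ < 30 * r → ‖ι v‖ < 30 * r →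
      ‖ι u - ι v‖ < r)
    {a b : V} (p : G.Walk a b) (h30 : ∀ x ∈ p.support, ‖ι x‖ < 30 * r)
    (c : EuclideanSpace ℝ (Fin d)) (ha : ‖ι a - c‖ < r) (hb : 2 * r ≤ ‖ι b - c‖) :
    AnnulusCrossing G ι r c := by
  obtain ⟨m, q, hsub, hm, hlt, hstep⟩ :=
    exists_first_cross (fun v => ‖ι v - c‖) (2 * r) p hb
  have hm' : 2 * r ≤ ‖ι m - c‖ := hm
  have hac : ‖ι a - c‖ < 2 * r := by linarith
  obtain ⟨u, hadj, hu, humem⟩ := hstep hac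
  have hu' : ‖ι u - c‖ < 2 * r := hu
  have hmmem : m ∈ p.support := hsub m q.end_mem_support
  have hedge := hshort u m hadj (h30 u humem) (h30 m hmmem)
  have hm3 : ‖ι m - c‖ < 3 * r := by
    have h1 : ‖ι m - c‖ ≤ ‖ι m - ι u‖ + ‖ι u - c‖ := by
      calc ‖ι m - c‖ = ‖(ι m - ι u) + (ι u - c)‖ := by rw [sub_add_sub_cancel]
        _ ≤ ‖ι m - ι u‖ + ‖ι u - c‖ := norm_add_le _ _
    have h2 : ‖ι m - ι u‖ = ‖ι u - ι m‖ := norm_sub_rev _ _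
    linarith
  refine ⟨a, m, q, ha, hm', fun x hx => ?_⟩
  rcases hlt x hx with h | rfl
  · have h' : ‖ι x - c‖ < 2 * r := h
    linarith
  · exact hm3


set_option maxHeartbeats 1000000 in
/-- Deterministic covering/factorization step (equation (2.1)) in the proof of
Theorem 1(i): if all edges between vertices inside the ball of radius `30r` are
shorter than `r`, and a walk inside that ball joins a vertex in the ball of
radius `10r` to a vertex at distance at least `20r` from the origin, then for any
unit-ball coverings `K` of the annulus `9 ≤ |x| ≤ 10` and `L` of the annulus
`20 ≤ |x| ≤ 21`, an annulus-crossing event at scale `r` occurs simultaneously at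
`r·k` and at `r·l` for some `k ∈ K`, `l ∈ L`. -/
theorem covering_factorization (d : ℕ) (hd : 1 ≤ d) (r : ℝ) (hr : 0 < r)
    (V : Type*) (ι : V → EuclideanSpace ℝ (Fin d)) (G : SimpleGraph V)
    (hshort : ∀ u v : V, G.Adj u v → ‖ι u‖ < 30 * r → ‖ι v‖ < 30 * r →
      ‖ι u - ι v‖ < r)
    (y₀ z : V) (w : G.Walk y₀ z)
    (hsupp : ∀ p ∈ w.support, ‖ι p‖ < 30 * r)
    (hy₀ : ‖ι y₀‖ < 10 * r) (hz : 20 * r ≤ ‖ι z‖)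
    (K L : Set (EuclideanSpace ℝ (Fin d)))
    (hK : {x : EuclideanSpace ℝ (Fin d) | 9 ≤ ‖x‖ ∧ ‖x‖ ≤ 10} ⊆
      ⋃ k ∈ K, Metric.ball k 1)
    (hL : {x : EuclideanSpace ℝ (Fin d) | 20 ≤ ‖x‖ ∧ ‖x‖ ≤ 21} ⊆
      ⋃ l ∈ L, Metric.ball l 1) :
    ∃ k ∈ K, ∃ l ∈ L,
      AnnulusCrossing G ι r (r • k) ∧ AnnulusCrossing G ι r (r • l) := by
  classical
  -- find u on the walk with 9r ≤ ‖ι u‖ < 10r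
  have hU : ∃ u ∈ w.support, 9 * r ≤ ‖ι u‖ ∧ ‖ι u‖ < 10 * r := by
    have hz9 : (9 : ℝ) * r ≤ ‖ι z‖ := by linarith
    obtain ⟨m, q, hsub, hm, -, hstep⟩ :=
      exists_first_cross (fun v => ‖ι v‖) (9 * r) w hz9
    have hm' : 9 * r ≤ ‖ι m‖ := hm
    by_cases hy9 : ‖ι y₀‖ < 9 * r
    · obtain ⟨u', hadj, hu', hmem'⟩ := hstep hy9
      have hu'' : ‖ι u'‖ < 9 * r := hu'
      have hmmem : m ∈ w.support := hsub m q.end_mem_support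
      have hedge := hshort u' m hadj (hsupp u' hmem') (hsupp m hmmem)
      refine ⟨m, hmmem, hm', ?_⟩
      have h1 : ‖ι m‖ - ‖ι u'‖ ≤ ‖ι m - ι u'‖ := norm_sub_norm_le _ _
      have h2 : ‖ι m - ι u'‖ = ‖ι u' - ι m‖ := norm_sub_rev _ _
      linarith
    · exact ⟨y₀, w.start_mem_support, not_lt.1 hy9, hy₀⟩
  -- find v on the walk with 20r ≤ ‖ι v‖ < 21r
  have hVx : ∃ v ∈ w.support, 20 * r ≤ ‖ι v‖ ∧ ‖ι v‖ < 21 * r := by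
    obtain ⟨m, q, hsub, hm, -, hstep⟩ :=
      exists_first_cross (fun v => ‖ι v‖) (20 * r) w hz
    have hm' : 20 * r ≤ ‖ι m‖ := hm
    have hy20 : ‖ι y₀‖ < 20 * r := by linarith
    obtain ⟨u', hadj, hu', hmem'⟩ := hstep hy20
    have hu'' : ‖ι u'‖ < 20 * r := hu'
    have hmmem : m ∈ w.support := hsub m q.end_mem_support
    have hedge := hshort u' m hadj (hsupp u' hmem') (hsupp m hmmem)
    refine ⟨m, hmmem, hm', ?_⟩
    have h1 : ‖ι m‖ - ‖ι u'‖ ≤ ‖ι m - ι u'‖ := norm_sub_norm_le _ _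
    have h2 : ‖ι m - ι u'‖ = ‖ι u' - ι m‖ := norm_sub_rev _ _
    linarith
  obtain ⟨u, humem, hu9, hu10⟩ := hU
  obtain ⟨v, hvmem, hv20, hv21⟩ := hVx
  -- covering gives centers k, l
  set xu : EuclideanSpace ℝ (Fin d) := (r⁻¹ : ℝ) • ι u with hxu_def
  have hxu_norm : ‖xu‖ = ‖ι u‖ / r := by
    rw [hxu_def, norm_smul, Real.norm_eq_abs, abs_inv, abs_of_pos hr, inv_mul_eq_div]
  have hxu_mem : xu ∈ {x : EuclideanSpace ℝ (Fin d) | 9 ≤ ‖x‖ ∧ ‖x‖ ≤ 10} := by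
    constructor
    · rw [hxu_norm, le_div_iff₀ hr]; linarith
    · rw [hxu_norm, div_le_iff₀ hr]; linarith
  obtain ⟨k, hkK, hdk⟩ : ∃ k ∈ K, dist xu k < 1 := by
    have := hK hxu_mem
    simpa [Set.mem_iUnion] using this
  set xv : EuclideanSpace ℝ (Fin d) := (r⁻¹ : ℝ) • ι v with hxv_def
  have hxv_norm : ‖xv‖ = ‖ι v‖ / r := by
    rw [hxv_def, norm_smul, Real.norm_eq_abs, abs_inv, abs_of_pos hr, inv_mul_eq_div]
  have hxv_mem : xv ∈ {x : EuclideanSpace ℝ (Fin d) | 20 ≤ ‖x‖ ∧ ‖x‖ ≤ 21} := by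
    constructor
    · rw [hxv_norm, le_div_iff₀ hr]; linarith
    · rw [hxv_norm, div_le_iff₀ hr]; linarith
  obtain ⟨l, hlL, hdl⟩ : ∃ l ∈ L, dist xv l < 1 := by
    have := hL hxv_mem
    simpa [Set.mem_iUnion] using this
  have hdk' : ‖xu - k‖ < 1 := by rw [← dist_eq_norm]; exact hdk
  have hdl' : ‖xv - l‖ < 1 := by rw [← dist_eq_norm]; exact hdl
  have hιu : ι u = r • xu := by rw [hxu_def, smul_inv_smul₀ hr.ne']
  have hιv : ι v = r • xv := by rw [hxv_def, smul_inv_smul₀ hr.ne']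
  have hdu : ‖ι u - r • k‖ < r := by
    have : ι u - r • k = r • (xu - k) := by rw [smul_sub, ← hιu]
    rw [this, norm_smul, Real.norm_eq_abs, abs_of_pos hr]
    nlinarith
  have hdv : ‖ι v - r • l‖ < r := by
    have : ι v - r • l = r • (xv - l) := by rw [smul_sub, ← hιv]
    rw [this, norm_smul, Real.norm_eq_abs, abs_of_pos hr]
    nlinarith
  -- norm bounds on centers
  have hk_lb : 8 < ‖k‖ := by
    have h1 : ‖xu‖ - ‖k‖ ≤ ‖xu - k‖ := norm_sub_norm_le _ _
    linarith [hxu_mem.1]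
  have hk_ub : ‖k‖ < 11 := by
    have h1 : ‖k‖ - ‖xu‖ ≤ ‖k - xu‖ := norm_sub_norm_le _ _
    have h2 : ‖k - xu‖ = ‖xu - k‖ := norm_sub_rev _ _
    linarith [hxu_mem.2]
  have hl_lb : 19 < ‖l‖ := by
    have h1 : ‖xv‖ - ‖l‖ ≤ ‖xv - l‖ := norm_sub_norm_le _ _
    linarith [hxv_mem.1]
  have hrk : ‖(r • k : EuclideanSpace ℝ (Fin d))‖ = r * ‖k‖ := by
    rw [norm_smul, Real.norm_eq_abs, abs_of_pos hr]
  have hrl : ‖(r • l : EuclideanSpace ℝ (Fin d))‖ = r * ‖l‖ := by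
    rw [norm_smul, Real.norm_eq_abs, abs_of_pos hr]
  -- far endpoints
  have hzk : 2 * r ≤ ‖ι z - r • k‖ := by
    have h1 : ‖ι z‖ - ‖r • k‖ ≤ ‖ι z - r • k‖ := norm_sub_norm_le _ _
    rw [hrk] at h1
    nlinarith
  have hyl : 2 * r ≤ ‖ι y₀ - r • l‖ := by
    have h1 : ‖r • l‖ - ‖ι y₀‖ ≤ ‖r • l - ι y₀‖ := norm_sub_norm_le _ _
    have h2 : ‖r • l - ι y₀‖ = ‖ι y₀ - r • l‖ := norm_sub_rev _ _
    rw [hrl] at h1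
    nlinarith
  refine ⟨k, hkK, l, hlL, ?_, ?_⟩
  · exact annulus_of_walk hr hshort (w.dropUntil u humem)
      (fun x hx => hsupp x (w.support_dropUntil_subset humem hx)) (r • k) hdu hzk
  · refine annulus_of_walk hr hshort (w.takeUntil v hvmem).reverse
      (fun x hx => hsupp x ?_) (r • l) hdv hyl
    rw [Walk.support_reverse, List.mem_reverse] at hx
    exact w.support_takeUntil_subset hvmem hx
end

section
/- Let δ > 0, 0 ≤ γ < 1/δ, 0 ≤ γ' < 1/δ with γ + γ' < 1, and for n > 1 set I(n) = ∫_{1/n}^1 ∫_{1/n}^1 min(1, (min(s,t))^{−γδ} (max(s,t))^{−γ'δ} n^{−δ}) ds dt. Then lim_{n→∞} (−log I(n) / log n) = δ. -/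
open Filter MeasureTheory Set Real Topology

/-!
Write `a = γδ`, `b = γ'δ`, `c = n^(-δ) ≤ 1` and `ε = 1/n`. Since `a, b ≥ 0` and the square
`[ε, 1]²` lies in `(0, 1]²`, the integrand is at least `c`; it is also at most
`c (s^(-a) t^(-b) + s^(-b) t^(-a))`, whose integral over the square is at most
`2c / ((1-a)(1-b))` uniformly in `ε` because `a, b < 1`. So `I(n)` is squeezed between two
constant multiples of `n^(-δ)`, and the constants disappear after dividing the logarithm by
`log n`.
-/

noncomputable def connectionKernel (a b c : ℝ) (p : ℝ × ℝ) : ℝ :=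
  min 1 (min p.1 p.2 ^ (-a) * max p.1 p.2 ^ (-b) * c)

noncomputable def squareIntegral (a b c ε : ℝ) : ℝ :=
  ∫ s in Icc ε 1, ∫ t in Icc ε 1, connectionKernel a b c (s, t)

section Kernel

variable {a b c : ℝ} {p : ℝ × ℝ}

lemma measurable_connectionKernel : Measurable (connectionKernel a b c) := by
  unfold connectionKernel
  fun_prop

lemma connectionKernel_le_one : connectionKernel a b c p ≤ 1 :=
  min_le_left _ _

lemma connectionKernel_nonneg (hc : 0 ≤ c) (h₁ : 0 ≤ p.1) (h₂ : 0 ≤ p.2) :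
    0 ≤ connectionKernel a b c p :=
  le_min zero_le_one <| mul_nonneg (mul_nonneg (rpow_nonneg (le_min h₁ h₂) _)
    (rpow_nonneg (le_max_of_le_left h₁) _)) hc

lemma le_connectionKernel (ha : 0 ≤ a) (hb : 0 ≤ b) (hc₀ : 0 ≤ c) (hc₁ : c ≤ 1)
    (h₁ : p.1 ∈ Ioc 0 1) (h₂ : p.2 ∈ Ioc 0 1) : c ≤ connectionKernel a b c p := by
  have hmin : 1 ≤ min p.1 p.2 ^ (-a) :=
    one_le_rpow_of_pos_of_le_one_of_nonpos (lt_min h₁.1 h₂.1) (min_le_of_left_le h₁.2)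
      (neg_nonpos.2 ha)
  have hmax : 1 ≤ max p.1 p.2 ^ (-b) :=
    one_le_rpow_of_pos_of_le_one_of_nonpos (lt_max_of_lt_left h₁.1) (max_le h₁.2 h₂.2)
      (neg_nonpos.2 hb)
  exact le_min hc₁ (le_mul_of_one_le_left hc₀ (one_le_mul_of_one_le_of_one_le hmin hmax))

lemma connectionKernel_le (hc : 0 ≤ c) (h₁ : 0 ≤ p.1) (h₂ : 0 ≤ p.2) :
    connectionKernel a b c p ≤ c * (p.1 ^ (-a) * p.2 ^ (-b) + p.1 ^ (-b) * p.2 ^ (-a)) := by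
  refine (min_le_right _ _).trans ?_
  rw [mul_comm]
  refine mul_le_mul_of_nonneg_left ?_ hc
  have hab := mul_nonneg (rpow_nonneg h₁ (-a)) (rpow_nonneg h₂ (-b))
  have hba := mul_nonneg (rpow_nonneg h₁ (-b)) (rpow_nonneg h₂ (-a))
  rcases le_total p.1 p.2 with h | h
  · rw [min_eq_left h, max_eq_right h]
    linarith
  · rw [min_eq_right h, max_eq_left h, mul_comm]
    linarith

end Kernel

section Integrals

variable {a b c ε : ℝ}

lemma integrableOn_Icc_rpow {r : ℝ} (hr : -1 < r) (hε : ε ≤ 1) :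
    IntegrableOn (fun t : ℝ => t ^ r) (Icc ε 1) :=
  (intervalIntegrable_iff_integrableOn_Icc_of_le hε).1
    (intervalIntegral.intervalIntegrable_rpow' hr)

lemma setIntegral_Icc_rpow_neg_le {r : ℝ} (hr : r < 1) (hε₀ : 0 ≤ ε) (hε₁ : ε ≤ 1) :
    ∫ t in Icc ε 1, t ^ (-r) ≤ (1 - r)⁻¹ := by
  rw [integral_Icc_eq_integral_Ioc, ← intervalIntegral.integral_of_le hε₁,
    integral_rpow (Or.inl (by linarith)), one_rpow, neg_add_eq_sub, div_eq_mul_inv]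
  have := rpow_nonneg hε₀ (1 - r)
  exact mul_le_of_le_one_left (inv_nonneg.2 (by linarith)) (by linarith)

lemma integrableOn_Icc_prod_rpow_mul_rpow {r r' : ℝ} (hr : -1 < r) (hr' : -1 < r')
    (hε : ε ≤ 1) :
    IntegrableOn (fun p : ℝ × ℝ => p.1 ^ r * p.2 ^ r') (Icc ε 1 ×ˢ Icc ε 1) := by
  rw [IntegrableOn, Measure.volume_eq_prod, ← Measure.prod_restrict]
  exact (integrableOn_Icc_rpow hr hε).mul_prod (integrableOn_Icc_rpow hr' hε)

lemma integrableOn_connectionKernel (hc : 0 ≤ c) (hε : 0 ≤ ε) :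
    IntegrableOn (connectionKernel a b c) (Icc ε 1 ×ˢ Icc ε 1) := by
  refine Measure.integrableOn_of_bounded (M := 1)
    (isCompact_Icc.prod isCompact_Icc).measure_lt_top.ne
    measurable_connectionKernel.aestronglyMeasurable ?_
  filter_upwards [ae_restrict_mem (measurableSet_Icc.prod measurableSet_Icc)] with p hp
  rw [norm_of_nonneg (connectionKernel_nonneg hc (hε.trans hp.1.1) (hε.trans hp.2.1))]
  exact connectionKernel_le_one

lemma squareIntegral_eq_setIntegral (hc : 0 ≤ c) (hε : 0 ≤ ε) :
    squareIntegral a b c ε = ∫ p in Icc ε 1 ×ˢ Icc ε 1, connectionKernel a b c p := by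
  rw [Measure.volume_eq_prod, setIntegral_prod _ (integrableOn_connectionKernel hc hε)]
  rfl

lemma mul_sq_le_squareIntegral (ha : 0 ≤ a) (hb : 0 ≤ b) (hc₀ : 0 ≤ c) (hc₁ : c ≤ 1)
    (hε₀ : 0 < ε) (hε₁ : ε ≤ 1) : c * (1 - ε) ^ 2 ≤ squareIntegral a b c ε := by
  rw [squareIntegral_eq_setIntegral hc₀ hε₀.le]
  calc c * (1 - ε) ^ 2 = ∫ _ in Icc ε 1 ×ˢ Icc ε 1, c := by
        rw [setIntegral_const, Measure.volume_eq_prod, measureReal_prod_prod,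
          volume_real_Icc, max_eq_left (by linarith), smul_eq_mul]
        ring
    _ ≤ ∫ p in Icc ε 1 ×ˢ Icc ε 1, connectionKernel a b c p :=
        setIntegral_mono_on (integrableOn_const (isCompact_Icc.prod isCompact_Icc).measure_ne_top)
          (integrableOn_connectionKernel hc₀ hε₀.le) (measurableSet_Icc.prod measurableSet_Icc)
          fun p hp => le_connectionKernel ha hb hc₀ hc₁ ⟨hε₀.trans_le hp.1.1, hp.1.2⟩
            ⟨hε₀.trans_le hp.2.1, hp.2.2⟩

lemma squareIntegral_le (ha : a < 1) (hb : b < 1) (hc : 0 ≤ c) (hε₀ : 0 ≤ ε) (hε₁ : ε ≤ 1) :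
    squareIntegral a b c ε ≤ 2 / ((1 - a) * (1 - b)) * c := by
  set A := ∫ t in Icc ε 1, t ^ (-a)
  set B := ∫ t in Icc ε 1, t ^ (-b)
  have hA : A ≤ (1 - a)⁻¹ := setIntegral_Icc_rpow_neg_le ha hε₀ hε₁
  have hB : B ≤ (1 - b)⁻¹ := setIntegral_Icc_rpow_neg_le hb hε₀ hε₁
  have hB₀ : 0 ≤ B :=
    setIntegral_nonneg measurableSet_Icc fun t ht => rpow_nonneg (hε₀.trans ht.1) _
  have hab := integrableOn_Icc_prod_rpow_mul_rpow (neg_lt_neg ha) (neg_lt_neg hb) hε₁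
  have hba := integrableOn_Icc_prod_rpow_mul_rpow (neg_lt_neg hb) (neg_lt_neg ha) hε₁
  rw [squareIntegral_eq_setIntegral hc hε₀]
  calc ∫ p in Icc ε 1 ×ˢ Icc ε 1, connectionKernel a b c p
      ≤ ∫ p in Icc ε 1 ×ˢ Icc ε 1, c * (p.1 ^ (-a) * p.2 ^ (-b) + p.1 ^ (-b) * p.2 ^ (-a)) :=
        setIntegral_mono_on (integrableOn_connectionKernel hc hε₀) ((hab.add hba).const_mul c)
          (measurableSet_Icc.prod measurableSet_Icc)
          fun p hp => connectionKernel_le hc (hε₀.trans hp.1.1) (hε₀.trans hp.2.1)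
    _ = 2 * (A * B) * c := by
        rw [integral_const_mul, integral_add hab hba, Measure.volume_eq_prod,
          setIntegral_prod_mul (fun t : ℝ => t ^ (-a)) (fun t : ℝ => t ^ (-b)),
          setIntegral_prod_mul (fun t : ℝ => t ^ (-b)) (fun t : ℝ => t ^ (-a))]
        ring
    _ ≤ 2 * ((1 - a)⁻¹ * (1 - b)⁻¹) * c := by
        gcongr
    _ = 2 / ((1 - a) * (1 - b)) * c := by rw [div_eq_mul_inv, mul_inv]

end Integrals

lemma tendsto_neg_log_div_log_of_rpow_bounds {f : ℝ → ℝ} {A B δ : ℝ} (hA : 0 < A)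
    (hlow : ∀ᶠ x in atTop, A * x ^ (-δ) ≤ f x) (hup : ∀ᶠ x in atTop, f x ≤ B * x ^ (-δ)) :
    Tendsto (fun x => -log (f x) / log x) atTop (𝓝 δ) := by
  have hlog : ∀ {C x : ℝ}, C ≠ 0 → 1 < x →
      -log (C * x ^ (-δ)) / log x = δ - log C / log x := fun hC hx => by
    rw [log_mul hC (rpow_pos_of_pos (zero_lt_one.trans hx) _).ne', log_rpow (zero_lt_one.trans hx)]
    field_simp [(log_pos hx).ne']
    ring
  have hlim : ∀ C, Tendsto (fun x => δ - log C / log x) atTop (𝓝 δ) := fun C => by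
    simpa using tendsto_const_nhds.sub (tendsto_const_nhds.div_atTop tendsto_log_atTop)
  have hrpow : ∀ {x : ℝ}, 1 < x → 0 < A * x ^ (-δ) := fun hx =>
    mul_pos hA (rpow_pos_of_pos (zero_lt_one.trans hx) _)
  refine tendsto_of_tendsto_of_tendsto_of_le_of_le' (hlim B) (hlim A) ?_ ?_
  · filter_upwards [hlow, hup, eventually_gt_atTop 1] with x hl hu hx
    have hf : 0 < f x := (hrpow hx).trans_le hl
    rw [← hlog (left_ne_zero_of_mul (hf.trans_le hu).ne') hx]
    exact div_le_div_of_nonneg_right (neg_le_neg (log_le_log hf hu)) (log_pos hx).le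
  · filter_upwards [hlow, eventually_gt_atTop 1] with x hl hx
    rw [← hlog hA.ne' hx]
    exact div_le_div_of_nonneg_right (neg_le_neg (log_le_log (hrpow hx) hl)) (log_pos hx).le

theorem deff_kernel_small_gamma_general (δ γ γ' : ℝ) (hδ : 0 < δ)
    (hγ0 : 0 ≤ γ) (hγ : γ < 1 / δ) (hγ'0 : 0 ≤ γ') (hγ' : γ' < 1 / δ) :
    Tendsto (fun n : ℝ =>
      -Real.log (∫ s in Set.Icc (1 / n) 1, ∫ t in Set.Icc (1 / n) 1,
          min 1 ((min s t) ^ (-(γ * δ)) * (max s t) ^ (-(γ' * δ)) * n ^ (-δ)))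
        / Real.log n) atTop (nhds δ) := by
  change Tendsto (fun n : ℝ => -log (squareIntegral (γ * δ) (γ' * δ) (n ^ (-δ)) (1 / n)) / log n)
    atTop (𝓝 δ)
  refine tendsto_neg_log_div_log_of_rpow_bounds (A := 1 / 4)
    (B := 2 / ((1 - γ * δ) * (1 - γ' * δ))) (by norm_num) ?_ ?_
  · filter_upwards [eventually_ge_atTop 2] with n hn
    have hc₀ : 0 ≤ n ^ (-δ) := rpow_nonneg (by linarith) _
    have hε : 1 / n ≤ 1 / 2 := one_div_le_one_div_of_le two_pos hn
    calc 1 / 4 * n ^ (-δ) ≤ n ^ (-δ) * (1 - 1 / n) ^ 2 := by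
          rw [mul_comm]
          gcongr
          nlinarith
      _ ≤ _ := mul_sq_le_squareIntegral (mul_nonneg hγ0 hδ.le) (mul_nonneg hγ'0 hδ.le) hc₀
          (rpow_le_one_of_one_le_of_nonpos (by linarith) (by linarith)) (by positivity)
          (by linarith)
  · filter_upwards [eventually_ge_atTop 1] with n hn
    exact squareIntegral_le ((lt_div_iff₀ hδ).1 hγ) ((lt_div_iff₀ hδ).1 hγ')
      (rpow_nonneg (by linarith) _) (by positivity) (div_le_one_of_le₀ hn (by linarith))

/-- Effective decay exponent of the weight-dependent random connection model with
interpolation kernel and long-range profile: in the regime `γ < 1/δ`, `γ' < 1/δ`,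
`γ + γ' < 1`, one has `δ_eff = δ`, i.e. `-log I(n) / log n → δ` for
`I(n) = ∫∫_{[1/n,1]²} min(1, (s∧t)^(-γδ)(s∨t)^(-γ'δ) n^(-δ)) ds dt`. -/
theorem deff_kernel_small_gamma (δ γ γ' : ℝ) (hδ : 0 < δ)
    (hγ0 : 0 ≤ γ) (hγ : γ < 1 / δ) (hγ'0 : 0 ≤ γ') (hγ' : γ' < 1 / δ)
    (hsum : γ + γ' < 1) :
    Tendsto (fun n : ℝ =>
      -Real.log (∫ s in Set.Icc (1 / n) 1, ∫ t in Set.Icc (1 / n) 1,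
          min 1 ((min s t) ^ (-(γ * δ)) * (max s t) ^ (-(γ' * δ)) * n ^ (-δ)))
        / Real.log n) atTop (nhds δ) :=
  deff_kernel_small_gamma_general δ γ γ' hδ hγ0 hγ hγ'0 hγ'
end

section
/- Let δ > 0, γ ≥ 0, γ' > 1/δ with 2/δ < γ + γ' < 1, and for n > 1 set I(n) = ∫_{1/n}^1 ∫_{1/n}^1 min(1, (min(s,t))^{−γδ} (max(s,t))^{−γ'δ} n^{−δ}) ds dt. Then lim_{n→∞} (−log I(n) / log n) = δ + 2 − δ(γ + γ'). -/
/-!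
Write `β = δ + 2 - δ(γ + γ')`. On `[1/n, 1]²` the integrand is at most `n^(-β) / (s t)`: with
`x = n (s ∧ t) ≤ y = n (s ∨ t)`, both at least `1`, this reduces to `x^(1-γδ) y^(1-γ'δ) ≤ 1`, which
holds because `γ'δ ≥ 1` and `(γ + γ')δ ≥ 2`. Integrating gives `I(n) ≤ n^(-β) (log n)²`.
Conversely, on `[1/n, 2/n]²` the integrand is at least `2^(-(γ+γ')δ) n^((γ+γ'-1)δ)`, which is
below the cap `1` because `γ + γ' ≤ 1`; hence `I(n) ≥ 2^(-(γ+γ')δ) n^(-β)`. So `I(n) = n^(-β+o(1))`.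
-/

open Filter MeasureTheory Real Set Topology

section IteratedSetIntegral

variable {α β : Type*} [MeasurableSpace α] [MeasurableSpace β] {μ : Measure α} {ν : Measure β}
  {S : Set α} {T : Set β} {f : α × β → ℝ}

theorem setIntegral_setIntegral_le_mul {g : α → ℝ} {h : β → ℝ}
    (hS : MeasurableSet S) (hT : MeasurableSet T)
    (hg : IntegrableOn g S μ) (hh : IntegrableOn h T ν)
    (hf₀ : ∀ x ∈ S, ∀ y ∈ T, 0 ≤ f (x, y)) (hfgh : ∀ x ∈ S, ∀ y ∈ T, f (x, y) ≤ g x * h y) :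
    ∫ x in S, ∫ y in T, f (x, y) ∂ν ∂μ ≤ (∫ x in S, g x ∂μ) * ∫ y in T, h y ∂ν := by
  rw [← integral_mul_const]
  refine integral_mono_of_nonneg ?_ (hg.mul_const _) ?_
  · exact ae_restrict_of_forall_mem hS fun x hx => setIntegral_nonneg hT (hf₀ x hx)
  · refine ae_restrict_of_forall_mem hS fun x hx => ?_
    dsimp only
    rw [← integral_const_mul]
    exact integral_mono_of_nonneg (ae_restrict_of_forall_mem hT (hf₀ x hx)) (hh.const_mul _)
      (ae_restrict_of_forall_mem hT (hfgh x hx))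

theorem mul_measureReal_le_setIntegral_setIntegral [SFinite μ] [SFinite ν]
    {A : Set α} {B : Set β} {m : ℝ} (hS : MeasurableSet S) (hT : MeasurableSet T)
    (hA : MeasurableSet A) (hB : MeasurableSet B) (hAS : A ⊆ S) (hBT : B ⊆ T)
    (hμA : μ A ≠ ⊤) (hνB : ν B ≠ ⊤) (hf : IntegrableOn f (S ×ˢ T) (μ.prod ν))
    (hf₀ : ∀ z ∈ S ×ˢ T, 0 ≤ f z) (hm : ∀ z ∈ A ×ˢ B, m ≤ f z) :
    m * (μ.real A * ν.real B) ≤ ∫ x in S, ∫ y in T, f (x, y) ∂ν ∂μ := by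
  have hABST : A ×ˢ B ⊆ S ×ˢ T := prod_mono hAS hBT
  rw [← setIntegral_prod f hf, ← measureReal_prod_prod]
  calc m * (μ.prod ν).real (A ×ˢ B) ≤ ∫ z in A ×ˢ B, f z ∂μ.prod ν :=
        setIntegral_ge_of_const_le_real (hA.prod hB)
          (by rw [Measure.prod_prod]; exact ENNReal.mul_ne_top hμA hνB) hm (hf.mono_set hABST)
    _ ≤ ∫ z in S ×ˢ T, f z ∂μ.prod ν :=
        setIntegral_mono_set hf (ae_restrict_of_forall_mem (hS.prod hT) hf₀) hABST.eventuallyLE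

end IteratedSetIntegral

theorem tendsto_neg_log_div_log_of_bounds {I : ℝ → ℝ} {β c : ℝ} (k : ℕ) (hc : 0 < c)
    (hlow : ∀ᶠ n in atTop, c * n ^ (-β) ≤ I n)
    (hup : ∀ᶠ n in atTop, I n ≤ n ^ (-β) * log n ^ k) :
    Tendsto (fun n => -log (I n) / log n) atTop (𝓝 β) := by
  have hloglog : Tendsto (fun n => log (log n) / log n) atTop (𝓝 0) :=
    isLittleO_log_id_atTop.tendsto_div_nhds_zero.comp tendsto_log_atTop
  have hlogc : Tendsto (fun n => log c / log n) atTop (𝓝 0) :=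
    tendsto_const_nhds.div_atTop tendsto_log_atTop
  refine tendsto_of_tendsto_of_tendsto_of_le_of_le'
    (g := fun n => β - k * (log (log n) / log n)) (h := fun n => β - log c / log n)
    (by simpa using tendsto_const_nhds.sub (hloglog.const_mul (k : ℝ)))
    (by simpa using tendsto_const_nhds.sub hlogc) ?_ ?_
  all_goals
    filter_upwards [hlow, hup, eventually_gt_atTop 1] with n hlow hup hn
    have hlogn : 0 < log n := log_pos hn
    have hI : 0 < I n := lt_of_lt_of_le (by positivity) hlow
  · rw [le_div_iff₀ hlogn]
    have h := log_le_log hI hup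
    rw [log_mul (by positivity) (by positivity), log_rpow (by linarith), log_pow] at h
    have : (β - k * (log (log n) / log n)) * log n = β * log n - k * log (log n) := by
      field_simp
    linarith
  · rw [div_le_iff₀ hlogn]
    have h := log_le_log (by positivity) hlow
    rw [log_mul hc.ne' (by positivity), log_rpow (by linarith)] at h
    have : (β - log c / log n) * log n = β * log n - log c := by
      field_simp
    linarith

theorem rpow_mul_rpow_le_one {x y a b : ℝ} (hx : 1 ≤ x) (hxy : x ≤ y) (hb : b ≤ 0)
    (hab : a + b ≤ 0) : x ^ a * y ^ b ≤ 1 := by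
  have hy : 1 ≤ y := hx.trans hxy
  rcases le_or_gt a 0 with ha | ha
  · exact mul_le_one₀ (rpow_le_one_of_one_le_of_nonpos hx ha) (by positivity)
      (rpow_le_one_of_one_le_of_nonpos hy hb)
  · calc x ^ a * y ^ b ≤ y ^ a * y ^ b := by gcongr
      _ = y ^ (a + b) := (rpow_add (by linarith) a b).symm
      _ ≤ 1 := rpow_le_one_of_one_le_of_nonpos hy hab

theorem integral_inv_Icc_one_div {n : ℝ} (hn : 1 ≤ n) : ∫ t in Icc (1 / n) 1, t⁻¹ = log n := by
  have hn₀ : 0 < n := by linarith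
  have hle : 1 / n ≤ 1 := (div_le_one hn₀).2 hn
  rw [integral_Icc_eq_integral_Ioc, ← intervalIntegral.integral_of_le hle,
    integral_inv_of_pos (one_div_pos.2 hn₀) one_pos, one_div_one_div]

/-- The connection probability `φ(s, t, n)`, with `z = (s, t)`. -/
noncomputable def connectionProb (γ γ' δ n : ℝ) (z : ℝ × ℝ) : ℝ :=
  min 1 ((min z.1 z.2) ^ (-(γ * δ)) * (max z.1 z.2) ^ (-(γ' * δ)) * n ^ (-δ))

noncomputable def connectionIntegral (γ γ' δ n : ℝ) : ℝ :=
  ∫ s in Icc (1 / n) 1, ∫ t in Icc (1 / n) 1, connectionProb γ γ' δ n (s, t)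

section ConnectionProb

variable {γ γ' δ n : ℝ}

theorem connectionProb_nonneg (hn : 0 ≤ n) {z : ℝ × ℝ} (hs : 0 < z.1) (ht : 0 < z.2) :
    0 ≤ connectionProb γ γ' δ n z :=
  le_min zero_le_one (by have := lt_min hs ht; positivity)

theorem measurable_connectionProb : Measurable (connectionProb γ γ' δ n) := by
  unfold connectionProb; fun_prop

theorem integrableOn_connectionProb (hn : 0 ≤ n) {a : ℝ} (ha : 0 < a) :
    IntegrableOn (connectionProb γ γ' δ n) (Icc a 1 ×ˢ Icc a 1) (volume.prod volume) := by
  refine Measure.integrableOn_of_bounded (M := 1) ?_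
    measurable_connectionProb.aestronglyMeasurable ?_
  · rw [Measure.prod_prod]
    exact ENNReal.mul_ne_top measure_Icc_lt_top.ne measure_Icc_lt_top.ne
  · refine ae_restrict_of_forall_mem (measurableSet_Icc.prod measurableSet_Icc) fun z hz => ?_
    rw [norm_of_nonneg (connectionProb_nonneg hn (ha.trans_le hz.1.1) (ha.trans_le hz.2.1))]
    exact min_le_left _ _

theorem connectionProb_le (hγ' : 1 ≤ γ' * δ) (hsum : 2 ≤ (γ + γ') * δ) (hn : 0 < n)
    {s t : ℝ} (hs : 1 / n ≤ s) (ht : 1 / n ≤ t) :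
    connectionProb γ γ' δ n (s, t) ≤ n ^ (-(δ + 2 - δ * (γ + γ'))) * (s⁻¹ * t⁻¹) := by
  set u := min s t
  set v := max s t
  have hu : 1 ≤ n * u := (div_le_iff₀' hn).1 (le_min hs ht)
  have huv : n * u ≤ n * v := mul_le_mul_of_nonneg_left min_le_max hn.le
  have hu₀ : 0 < u := (one_div_pos.2 hn).trans_le (le_min hs ht)
  have hv₀ : 0 < v := hu₀.trans_le min_le_max
  have hscale : u ^ (-(γ * δ)) * v ^ (-(γ' * δ)) * n ^ (-δ) =
      (n * u) ^ (1 - γ * δ) * (n * v) ^ (1 - γ' * δ) *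
        (n ^ (-(δ + 2 - δ * (γ + γ'))) * (u⁻¹ * v⁻¹)) := by
    have hu_inv : u⁻¹ = exp (-log u) := by rw [exp_neg, exp_log hu₀]
    have hv_inv : v⁻¹ = exp (-log v) := by rw [exp_neg, exp_log hv₀]
    simp only [rpow_def_of_pos hu₀, rpow_def_of_pos hv₀, rpow_def_of_pos hn,
      rpow_def_of_pos (mul_pos hn hu₀), rpow_def_of_pos (mul_pos hn hv₀), log_mul hn.ne' hu₀.ne',
      log_mul hn.ne' hv₀.ne', hu_inv, hv_inv, ← exp_add]
    ring_nf
  calc connectionProb γ γ' δ n (s, t) ≤ u ^ (-(γ * δ)) * v ^ (-(γ' * δ)) * n ^ (-δ) :=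
        min_le_right _ _
    _ ≤ 1 * (n ^ (-(δ + 2 - δ * (γ + γ'))) * (u⁻¹ * v⁻¹)) := by
        rw [hscale]
        gcongr
        exact rpow_mul_rpow_le_one hu huv (by linarith) (by linarith)
    _ = n ^ (-(δ + 2 - δ * (γ + γ'))) * (s⁻¹ * t⁻¹) := by
        rw [one_mul, ← mul_inv, ← mul_inv, min_mul_max]

theorem min_one_le_connectionProb (hγ : 0 ≤ γ * δ) (hγ' : 0 ≤ γ' * δ) (hn : 0 ≤ n)
    {r : ℝ} {z : ℝ × ℝ} (hs : 0 < z.1) (ht : 0 < z.2) (hsr : z.1 ≤ r) (htr : z.2 ≤ r) :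
    min 1 (r ^ (-(γ * δ)) * r ^ (-(γ' * δ)) * n ^ (-δ)) ≤ connectionProb γ γ' δ n z := by
  have hu₀ : 0 < min z.1 z.2 := lt_min hs ht
  have hr₀ : 0 < r := hs.trans_le hsr
  refine min_le_min_left _ (mul_le_mul_of_nonneg_right (mul_le_mul ?_ ?_ (by positivity)
    (by positivity)) (by positivity))
  · exact rpow_le_rpow_of_nonpos hu₀ (min_le_of_left_le hsr) (by linarith)
  · exact rpow_le_rpow_of_nonpos (hu₀.trans_le min_le_max) (max_le hsr htr) (by linarith)

end ConnectionProb

section ConnectionIntegral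

variable {γ γ' δ n : ℝ}

theorem connectionIntegral_le (hγ' : 1 ≤ γ' * δ) (hsum : 2 ≤ (γ + γ') * δ) (hn : 1 ≤ n) :
    connectionIntegral γ γ' δ n ≤ n ^ (-(δ + 2 - δ * (γ + γ'))) * log n ^ 2 := by
  have hn₀ : 0 < n := by linarith
  have hpos : ∀ s ∈ Icc (1 / n) 1, 0 < s := fun s hs => (one_div_pos.2 hn₀).trans_le hs.1
  have hinv : IntegrableOn (fun s : ℝ => s⁻¹) (Icc (1 / n) 1) :=
    (continuousOn_inv₀.mono fun s hs => (hpos s hs).ne').integrableOn_Icc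
  calc connectionIntegral γ γ' δ n
      ≤ (∫ s in Icc (1 / n) 1, n ^ (-(δ + 2 - δ * (γ + γ'))) * s⁻¹) * ∫ t in Icc (1 / n) 1, t⁻¹ :=
        setIntegral_setIntegral_le_mul measurableSet_Icc measurableSet_Icc (hinv.const_mul _) hinv
          (fun s hs t ht => connectionProb_nonneg hn₀.le (hpos s hs) (hpos t ht))
          (fun s hs t ht => (connectionProb_le hγ' hsum hn₀ hs.1 ht.1).trans_eq (mul_assoc ..).symm)
    _ = n ^ (-(δ + 2 - δ * (γ + γ'))) * log n ^ 2 := by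
        rw [integral_const_mul, integral_inv_Icc_one_div hn]; ring

theorem le_connectionIntegral (hδ : 0 ≤ δ) (hγ : 0 ≤ γ) (hγ' : 0 ≤ γ') (hsum : γ + γ' ≤ 1)
    (hn : 2 ≤ n) :
    2 ^ (-((γ + γ') * δ)) * n ^ (-(δ + 2 - δ * (γ + γ'))) ≤ connectionIntegral γ γ' δ n := by
  have hn₀ : 0 < n := by linarith
  have h2n : 0 < 2 / n := by positivity
  set m := (2 / n) ^ (-(γ * δ)) * (2 / n) ^ (-(γ' * δ)) * n ^ (-δ)
  have hm : m = 2 ^ (-((γ + γ') * δ)) * n ^ ((γ + γ' - 1) * δ) := by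
    simp only [m, rpow_def_of_pos h2n, rpow_def_of_pos hn₀, rpow_def_of_pos two_pos,
      log_div two_ne_zero hn₀.ne', ← exp_add]
    ring_nf
  have hm_le : m ≤ 1 := by
    rw [hm]
    exact mul_le_one₀ (rpow_le_one_of_one_le_of_nonpos one_le_two (by nlinarith)) (by positivity)
      (rpow_le_one_of_one_le_of_nonpos (by linarith) (by nlinarith))
  have hvol : volume.real (Icc (1 / n) (2 / n)) = n ^ (-1 : ℝ) := by
    rw [volume_real_Icc_of_le (by gcongr; norm_num), rpow_neg_one]; ring
  have hsub : Icc (1 / n) (2 / n) ⊆ Icc (1 / n) 1 := Icc_subset_Icc le_rfl ((div_le_one hn₀).2 hn)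
  have hpos : ∀ s ∈ Icc (1 / n) 1, 0 < s := fun s hs => (one_div_pos.2 hn₀).trans_le hs.1
  calc 2 ^ (-((γ + γ') * δ)) * n ^ (-(δ + 2 - δ * (γ + γ')))
      = min 1 m * (volume.real (Icc (1 / n) (2 / n)) * volume.real (Icc (1 / n) (2 / n))) := by
        rw [min_eq_right hm_le, hm, hvol, mul_assoc, ← rpow_add hn₀, ← rpow_add hn₀]
        ring_nf
    _ ≤ connectionIntegral γ γ' δ n :=
        mul_measureReal_le_setIntegral_setIntegral measurableSet_Icc measurableSet_Icc
          measurableSet_Icc measurableSet_Icc hsub hsub measure_Icc_lt_top.ne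
          measure_Icc_lt_top.ne (integrableOn_connectionProb hn₀.le (one_div_pos.2 hn₀))
          (fun z hz => connectionProb_nonneg hn₀.le (hpos _ hz.1) (hpos _ hz.2))
          (fun z hz => min_one_le_connectionProb (by positivity) (by positivity) hn₀.le
            (hpos _ (hsub hz.1)) (hpos _ (hsub hz.2)) hz.1.2 hz.2.2)

end ConnectionIntegral

/-- Effective decay exponent of the weight-dependent random connection model with
interpolation kernel and long-range profile: in the regime `γ' > 1/δ`,
`2/δ < γ + γ' < 1`, one has `δ_eff = δ + 2 - δ(γ + γ')`, i.e.
`-log I(n) / log n → δ + 2 - δ(γ + γ')` for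
`I(n) = ∫∫_{[1/n,1]²} min(1, (s∧t)^(-γδ)(s∨t)^(-γ'δ) n^(-δ)) ds dt`. -/
theorem deff_kernel_large_gamma' (δ γ γ' : ℝ) (hδ : 0 < δ)
    (hγ0 : 0 ≤ γ) (hγ' : 1 / δ < γ') (hsum_lower : 2 / δ < γ + γ')
    (hsum : γ + γ' < 1) :
    Tendsto (fun n : ℝ =>
      -Real.log (∫ s in Set.Icc (1 / n) 1, ∫ t in Set.Icc (1 / n) 1,
          min 1 ((min s t) ^ (-(γ * δ)) * (max s t) ^ (-(γ' * δ)) * n ^ (-δ)))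
        / Real.log n) atTop (nhds (δ + 2 - δ * (γ + γ'))) := by
  have hγ'δ : 1 ≤ γ' * δ := by rw [div_lt_iff₀ hδ] at hγ'; linarith
  have hsumδ : 2 ≤ (γ + γ') * δ := by rw [div_lt_iff₀ hδ] at hsum_lower; linarith
  have hγ'₀ : 0 ≤ γ' := (one_div_pos.2 hδ).le.trans hγ'.le
  exact tendsto_neg_log_div_log_of_bounds (I := connectionIntegral γ γ' δ) 2 (by positivity)
    (eventually_ge_atTop 2 |>.mono fun n hn =>
      le_connectionIntegral hδ.le hγ0 hγ'₀ hsum.le hn)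
    (eventually_ge_atTop 1 |>.mono fun n hn => connectionIntegral_le hγ'δ hsumδ hn)
end
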